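/- arXiv:0908.0391 — 2 statements merged into one kernel-verified Lean document; each statement's English description precedes it below -/
import Mathlib

section
/- Fix integers k,N≥2 and a partition π={B_1,…,B_r} of {1,…,k} containing at least one block of cardinality ≥2. Then there exists a finite constant Θ(k,π)≥0 depending only on k and π (not on N) such that |C_π(2k,N)| ≤ Θ(k,π) · N^{k−1}. -/
/-!
Let `V₁, V₂` be the sets of indices of the upper and lower sub-chains and `E₁, E₂` their sets of
pairs, so `|E₁|, |E₂| ≤ r := |π|`, and `|Vᵢ| ≤ |Eᵢ|` since every index starts a pair. An index in
`V₂ \ V₁` ends a lower pair outside `E₁`, whence `|V₁ ∪ V₂| ≤ |V₁| + |E₂| - |E₂ ∩ E₁|`. Each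
singleton block of the lower sub-chain yields its own shared pair, and without singletons the
correspondence condition yields one. With singletons, moreover, `|V₁| < |E₁|`: otherwise every
index determines its successor, so for `b ≠ b'` in a block of size `≥ 2` the pairs at positions
`b + n` and `b' + n` agree for every `n`, which fails when `b + n` forms a singleton block.
Together with `2r ≤ k + #singletons` this leaves at most `k - 1` indices, and chains on at most
`k - 1` indices factor through `Fin (k - 1)`, giving at most `(k - 1)^{2k} N^{k - 1}` of them.
-/

open Finset

noncomputable section

/-- `a ∼_π b`: `a` and `b` lie in the same block of the partition `π`. -/
def pRel {k : ℕ} (π : Finpartition (univ : Finset (Fin k))) (a b : Fin k) : Prop :=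
  ∃ B ∈ π.parts, a ∈ B ∧ b ∈ B

/-- A chain, encoded by its upper and lower index vectors `(i, j)`, has
partition `π`: cyclically consecutive pairs coincide exactly within blocks,
both in the upper and in the lower sub-chain. -/
def ChainHasPartition {k N : ℕ} (π : Finpartition (univ : Finset (Fin k)))
    (c : (Fin k → Fin N) × (Fin k → Fin N)) : Prop :=
  (∀ a b : Fin k,
    ((c.1 a, c.1 (finRotate k a)) = (c.1 b, c.1 (finRotate k b)) ↔ pRel π a b)) ∧
  (∀ a b : Fin k,
    ((c.2 a, c.2 (finRotate k a)) = (c.2 b, c.2 (finRotate k b)) ↔ pRel π a b))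

/-- The block `B` of the sub-chain `f` corresponds to the block `B'` of the
sub-chain `g`. -/
def Corresponds {k N : ℕ} (f g : Fin k → Fin N) (B B' : Finset (Fin k)) : Prop :=
  ∀ a ∈ B, ∀ x ∈ B', (f a, f (finRotate k a)) = (g x, g (finRotate k x))

/-- The class `C_π(2k, N)` of chains with partition `π` such that: if all blocks
of `π` have cardinality `≥ 2`, some upper block corresponds to some lower block;
and every singleton block of the upper (resp. lower) sub-chain corresponds to a
block of the lower (resp. upper) sub-chain. -/
def chainClass (k N : ℕ) (π : Finpartition (univ : Finset (Fin k))) :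
    Set ((Fin k → Fin N) × (Fin k → Fin N)) :=
  {c | ChainHasPartition π c ∧
    ((∀ B ∈ π.parts, 2 ≤ B.card) →
      ∃ B ∈ π.parts, ∃ B' ∈ π.parts, Corresponds c.1 c.2 B B') ∧
    (∀ B ∈ π.parts, B.card = 1 →
      (∃ B' ∈ π.parts, Corresponds c.1 c.2 B B') ∧
      (∃ B' ∈ π.parts, Corresponds c.2 c.1 B B'))}

lemma Finpartition.two_mul_card_parts_le {α : Type*} [DecidableEq α] {s : Finset α}
    (P : Finpartition s) : 2 * #P.parts ≤ #s + #{B ∈ P.parts | #B = 1} := by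
  calc 2 * #P.parts = ∑ _ ∈ P.parts, 2 := by rw [sum_const, smul_eq_mul, mul_comm]
    _ ≤ ∑ B ∈ P.parts, (#B + if #B = 1 then 1 else 0) := sum_le_sum fun B hB => by
      have := card_pos.2 (P.nonempty_of_mem_parts hB)
      split_ifs <;> omega
    _ = #s + #{B ∈ P.parts | #B = 1} := by rw [sum_add_distrib, P.sum_card_parts, card_filter]

lemma Equiv.Perm.apply_pow_eq_apply_pow {α β : Type*} (σ : Equiv.Perm α) (f : α → β)
    (h : ∀ a b, f a = f b → f (σ a) = f (σ b)) {a b : α} (hab : f a = f b) (n : ℕ) :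
    f ((σ ^ n) a) = f ((σ ^ n) b) := by
  induction n with
  | zero => exact hab
  | succ n ih => simpa only [pow_succ', Equiv.Perm.mul_apply] using h _ _ ih

namespace Chain

variable {k : ℕ} {β : Type*}

def edge (f : Fin k → β) (a : Fin k) : β × β := (f a, f (finRotate k a))

def SubchainHasPartition (π : Finpartition (univ : Finset (Fin k))) (f : Fin k → β) : Prop :=
  ∀ a b, edge f a = edge f b ↔ pRel π a b

section edges

variable [DecidableEq β] (f g : Fin k → β)

lemma image_fst_edge : (univ.image (edge f)).image Prod.fst = univ.image f := by
  rw [image_image]; rfl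

lemma image_snd_edge : (univ.image (edge f)).image Prod.snd = univ.image f := by
  rw [image_image, show Prod.snd ∘ edge f = f ∘ finRotate k from rfl, ← image_image,
    image_univ_equiv]

lemma card_image_le_card_image_edge : #(univ.image f) ≤ #(univ.image (edge f)) :=
  image_fst_edge f ▸ card_image_le

lemma card_image_sdiff_le_card_image_edge_sdiff :
    #(univ.image g \ univ.image f) ≤ #(univ.image (edge g) \ univ.image (edge f)) := by
  refine (card_le_card fun v hv => ?_).trans (card_image_le (f := Prod.snd))
  rw [mem_sdiff, ← image_snd_edge g, ← image_snd_edge f] at hv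
  obtain ⟨⟨e, he, rfl⟩, hv⟩ := And.imp_left mem_image.1 hv
  exact mem_image_of_mem _ (mem_sdiff.2 ⟨he, fun h => hv (mem_image_of_mem _ h)⟩)

lemma apply_finRotate_eq_of_card_image_edge_le (h : #(univ.image (edge f)) ≤ #(univ.image f))
    {a b : Fin k} (hab : f a = f b) : f (finRotate k a) = f (finRotate k b) := by
  have hinj : Set.InjOn Prod.fst (univ.image (edge f) : Set (β × β)) := by
    refine injOn_of_card_image_eq ?_
    rw [image_fst_edge]
    exact (card_image_le_card_image_edge f).antisymm h
  exact congrArg Prod.snd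
    (hinj (mem_image_of_mem _ (mem_univ a)) (mem_image_of_mem _ (mem_univ b)) hab)

end edges

section partition

variable {π : Finpartition (univ : Finset (Fin k))} [DecidableEq β] {f g : Fin k → β}

lemma card_image_edge_le (hf : SubchainHasPartition π f) : #(univ.image (edge f)) ≤ #π.parts := by
  refine card_le_card_of_forall_subsingleton (fun e B => ∃ a ∈ B, edge f a = e)
    (fun e he => ?_) fun B hB e₁ ⟨_, a₁, ha₁, he₁⟩ e₂ ⟨_, a₂, ha₂, he₂⟩ => ?_
  · obtain ⟨a, -, rfl⟩ := mem_image.1 he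
    exact ⟨π.part a, π.part_mem.2 (mem_univ a), a, π.mem_part_self.2 (mem_univ a), rfl⟩
  · rw [← he₁, ← he₂]
    exact (hf a₁ a₂).2 ⟨B, hB, ha₁, ha₂⟩

lemma card_le_card_image_edge_inter (hg : SubchainHasPartition π g) (f : Fin k → β)
    {s : Finset (Finset (Fin k))} (hs : s ⊆ π.parts)
    (hcorr : ∀ B ∈ s, ∃ B' ∈ π.parts, ∀ a ∈ B, ∀ x ∈ B', edge g a = edge f x) :
    #s ≤ #(univ.image (edge g) ∩ univ.image (edge f)) := by
  refine card_le_card_of_forall_subsingleton (fun B e => ∃ a ∈ B, edge g a = e)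
    (fun B hB => ?_) fun e _ B₁ ⟨hB₁, a₁, ha₁, he₁⟩ B₂ ⟨hB₂, a₂, ha₂, he₂⟩ => ?_
  · obtain ⟨B', hB', hBB'⟩ := hcorr B hB
    obtain ⟨a, ha⟩ := π.nonempty_of_mem_parts (hs hB)
    obtain ⟨x, hx⟩ := π.nonempty_of_mem_parts hB'
    exact ⟨edge g a, mem_inter.2 ⟨mem_image_of_mem _ (mem_univ a),
      hBB' a ha x hx ▸ mem_image_of_mem _ (mem_univ x)⟩, a, ha, rfl⟩
  · obtain ⟨C, hC, ha₁C, ha₂C⟩ := (hg a₁ a₂).1 (he₁.trans he₂.symm)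
    exact (π.eq_of_mem_parts (hs hB₁) hC ha₁ ha₁C).trans
      (π.eq_of_mem_parts hC (hs hB₂) ha₂C ha₂)

lemma card_image_lt_card_image_edge (hk : 2 ≤ k) (hf : SubchainHasPartition π f)
    (hbig : ∃ B ∈ π.parts, 2 ≤ #B) (hsingle : ∃ B ∈ π.parts, #B = 1) :
    #(univ.image f) < #(univ.image (edge f)) := by
  refine (card_image_le_card_image_edge f).lt_of_not_ge fun hle => ?_
  obtain ⟨B, hB, hB2⟩ := hbig
  obtain ⟨b, hb, b', hb', hbb'⟩ := one_lt_card.1 hB2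
  obtain ⟨A, hA, hA1⟩ := hsingle
  obtain ⟨a₀, rfl⟩ := card_eq_one.1 hA1
  have hmoves (x : Fin k) : finRotate k x ≠ x := by
    rw [← Equiv.Perm.mem_support, support_finRotate_of_le hk]; exact mem_univ x
  obtain ⟨n, hn⟩ := (isCycle_finRotate_of_le hk).exists_pow_eq (hmoves b) (hmoves a₀)
  have hstep := (finRotate k).apply_pow_eq_apply_pow f
    (fun _ _ => apply_finRotate_eq_of_card_image_edge_le f hle)
    (congrArg Prod.fst ((hf b b').2 ⟨B, hB, hb, hb'⟩))
  have hedge : edge f a₀ = edge f ((finRotate k ^ n) b') := by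
    rw [← hn]
    refine Prod.ext (hstep n) ?_
    simpa only [edge, pow_succ', Equiv.Perm.mul_apply] using hstep (n + 1)
  obtain ⟨C, hC, ha₀C, hb'C⟩ := (hf _ _).1 hedge
  rw [π.eq_of_mem_parts hC hA ha₀C (mem_singleton_self a₀), mem_singleton, ← hn] at hb'C
  exact hbb' ((finRotate k ^ n).injective hb'C).symm

end partition

theorem card_image_union_le_of_mem_chainClass {N : ℕ} {π : Finpartition (univ : Finset (Fin k))}
    (hk : 2 ≤ k) (hπ : ∃ B ∈ π.parts, 2 ≤ #B) {c : (Fin k → Fin N) × (Fin k → Fin N)}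
    (hc : c ∈ chainClass k N π) : #(univ.image c.1 ∪ univ.image c.2) ≤ k - 1 := by
  obtain ⟨⟨h₁ : SubchainHasPartition π c.1, h₂ : SubchainHasPartition π c.2⟩, hbig, hsingle⟩ := hc
  have hunion : #(univ.image c.1 ∪ univ.image c.2) =
      #(univ.image c.2 \ univ.image c.1) + #(univ.image c.1) := by
    rw [union_comm, card_sdiff_add_card]
  have hnew := card_image_sdiff_le_card_image_edge_sdiff c.1 c.2
  have hsplit := card_sdiff_add_card_inter (univ.image (edge c.2)) (univ.image (edge c.1))
  have hE₁ := card_image_edge_le h₁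
  have hE₂ := card_image_edge_le h₂
  have hparts : 2 * #π.parts ≤ k + #{B ∈ π.parts | #B = 1} := by
    simpa using π.two_mul_card_parts_le
  by_cases hall : ∀ B ∈ π.parts, 2 ≤ #B
  · obtain ⟨B, hB, B', hB', hBB'⟩ := hbig hall
    have hshared := card_le_card_image_edge_inter h₁ c.2 (singleton_subset_iff.2 hB)
      (by simpa using ⟨B', hB', hBB'⟩)
    rw [card_singleton, inter_comm] at hshared
    have hnone : {B ∈ π.parts | #B = 1} = ∅ :=
      filter_eq_empty_iff.2 fun B hB hB1 => by have := hall B hB; omega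
    rw [hnone, card_empty] at hparts
    have := card_image_le_card_image_edge c.1
    omega
  · obtain ⟨B, hB, hB2⟩ : ∃ B ∈ π.parts, #B < 2 := by simpa using hall
    have hB1 : #B = 1 := by have := card_pos.2 (π.nonempty_of_mem_parts hB); omega
    have hshared : #{B ∈ π.parts | #B = 1} ≤
        #(univ.image (edge c.2) ∩ univ.image (edge c.1)) :=
      card_le_card_image_edge_inter h₂ c.1 (filter_subset _ _) fun B hB =>
        (hsingle B (mem_filter.1 hB).1 (mem_filter.1 hB).2).2
    have hsingletons : 0 < #{B ∈ π.parts | #B = 1} := card_pos.2 ⟨B, by simp [hB, hB1]⟩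
    have := card_image_lt_card_image_edge hk h₁ hπ ⟨B, hB, hB1⟩
    omega

end Chain

lemma exists_comp_eq_of_card_image_union_le {α β : Type*} [Fintype α] [DecidableEq β] [Nonempty β]
    {m : ℕ} (c : (α → β) × (α → β)) (h : #(univ.image c.1 ∪ univ.image c.2) ≤ m) :
    ∃ p q : α → Fin m, ∃ g : Fin m → β, (g ∘ p, g ∘ q) = c := by
  set S := univ.image c.1 ∪ univ.image c.2
  let e : S ↪ Fin m := S.equivFin.toEmbedding.trans (Fin.castLEEmb h)
  let g : Fin m → β := Function.extend e Subtype.val fun _ => Classical.arbitrary β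
  have hg (v : β) (hv : v ∈ S) : g (e ⟨v, hv⟩) = v := e.injective.extend_apply _ _ _
  refine ⟨fun a => e ⟨c.1 a, ?_⟩, fun a => e ⟨c.2 a, ?_⟩, g, ?_⟩
  · exact mem_union_left _ (mem_image_of_mem _ (mem_univ a))
  · exact mem_union_right _ (mem_image_of_mem _ (mem_univ a))
  · ext a <;> exact hg _ _

lemma ncard_setOf_card_image_union_le {α β : Type*} [Fintype α] [Fintype β] [DecidableEq β]
    [Nonempty β] (m : ℕ) :
    {c : (α → β) × (α → β) | #(univ.image c.1 ∪ univ.image c.2) ≤ m}.ncard ≤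
      m ^ (2 * Fintype.card α) * Fintype.card β ^ m := by
  let F : (α → Fin m) × (α → Fin m) × (Fin m → β) → (α → β) × (α → β) :=
    fun t => (t.2.2 ∘ t.1, t.2.2 ∘ t.2.1)
  have hsub : {c : (α → β) × (α → β) | #(univ.image c.1 ∪ univ.image c.2) ≤ m} ⊆ Set.range F :=
    fun c hc => by
      obtain ⟨p, q, g, rfl⟩ := exists_comp_eq_of_card_image_union_le c hc
      exact ⟨(p, q, g), rfl⟩
  calc _ ≤ (Set.range F).ncard := Set.ncard_le_ncard hsub
    _ ≤ (Set.univ : Set ((α → Fin m) × (α → Fin m) × (Fin m → β))).ncard := by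
      rw [← Set.image_univ]; exact Set.ncard_image_le
    _ = _ := by
      simp only [Set.ncard_univ, Nat.card_prod, Nat.card_fun, Nat.card_eq_fintype_card,
        Fintype.card_fun, Fintype.card_fin]
      ring

/-- Proposition 4.4: if `π` has at least one block of cardinality `≥ 2`, then
`|C_π(2k, N)| ≤ Θ(k, π) · N^{k-1}` for a constant `Θ(k, π)` independent of `N`. -/
theorem chainClass_card_bound
    (k : ℕ) (hk : 2 ≤ k)
    (π : Finpartition (univ : Finset (Fin k)))
    (hπ : ∃ B ∈ π.parts, 2 ≤ B.card) :
    ∃ Θ : ℝ, 0 ≤ Θ ∧ ∀ N : ℕ, 2 ≤ N →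
      ((chainClass k N π).ncard : ℝ) ≤ Θ * (N : ℝ) ^ (k - 1) := by
  refine ⟨((k - 1 : ℕ) : ℝ) ^ (2 * k), by positivity, fun N hN => ?_⟩
  have : Nonempty (Fin N) := ⟨⟨0, by omega⟩⟩
  have hsub : chainClass k N π ⊆ {c | #(univ.image c.1 ∪ univ.image c.2) ≤ k - 1} :=
    fun c hc => Chain.card_image_union_le_of_mem_chainClass hk hπ hc
  have hcard := (Set.ncard_le_ncard hsub).trans (ncard_setOf_card_image_union_le (k - 1))
  rw [Fintype.card_fin, Fintype.card_fin] at hcard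
  exact_mod_cast hcard

end
end

section
/- Fix k≥2 and, for N≥2, let f_{k,N}:({1,…,N}^2)^k→R be the symmetric kernel f_{k,N} = (1/k!) Σ_{σ∈S_k} f_{k,N}^{(σ)}, where f_{k,N}^{(σ)}((a_1,b_1),…,(a_k,b_k)) = N^{−k/2} Σ_{i∈D_N^{(k)}} 1{i_{σ(1)}=a_1, i_{σ(1)+1}=b_1}⋯1{i_{σ(k)}=a_k, i_{σ(k)+1}=b_k}. Then for every r=1,…,k−1, ‖f_{k,N} ⋆_r f_{k,N}‖_{2k−2r} = O(N^{−1/2}) as N→∞; in fact ‖f_{k,N}^{(σ)} ⋆_r f_{k,N}^{(τ)}‖_{2k−2r}^2 ≤ N^{−1} for all σ,τ∈S_k. -/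
/-!
Both kernels are scaled counting measures of edge sequences: `f^{(σ)}` puts mass `N^{-k/2}` on
`s ↦ (i_{σ(s)}, i_{σ(s)+1})` for each `i ∈ D_N^{(k)}`, and `f` puts mass `N^{-k/2}/k!` on these
for every pair `(i, σ)`. For counting kernels, `‖f ⋆_r g‖²` is the squared product of the masses
times the number of quadruples `(v₁, v₂, v₁', v₂')` of support points in which `v₁, v₂` and
`v₁', v₂'` agree in the `r` contracted coordinates while `v₁, v₁'` and `v₂, v₂'` agree in the
`k - r` free ones.

With the permutations fixed, such a quadruple of edge sequences of `(i, j, i', j')` is determined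
by `i` together with all entries of `j'` but one: every entry of `j` and `i'` is read off an
agreement. Since `0 < r < k`, the images under `τ` of the free positions form a nonempty proper
subset of the cycle `s ↦ s + 1`, so some `τ(s₁)` with `s₁` free is followed by `τ(s₂)` with `s₂`
contracted, and the agreements at `s₁` and `s₂` tie `j'(τ'(s₁) + 1)` to `i(σ(s₂))`. So there are
at most `N^{2k-1}` quadruples, and `N^{-2k} · N^{2k-1} = N^{-1}`; for `f` the `(k!)^4` choices of
permutations cancel the factor `(1/k!)^4`.
-/

open MeasureTheory Filter Topology
open scoped Classical

noncomputable section

/-- `D_N^{(k)}`: the set of `i ∈ [N]^k` whose `k` cyclically consecutive pairs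
`(i_a, i_{a+1})` are pairwise distinct. -/
def DN (N k : ℕ) : Finset (Fin k → Fin N) :=
  Finset.univ.filter fun i => ∀ a b : Fin k, a ≠ b →
    (i a, i (finRotate k a)) ≠ (i b, i (finRotate k b))

/-- Concatenation `(a₁,…,a_{k-r},x₁,…,x_r)`. -/
def splice {A : Type*} (k r : ℕ) (a : Fin (k - r) → A) (x : Fin r → A) : Fin k → A :=
  fun s => if h : (s : ℕ) < k - r then a ⟨s, h⟩
    else x ⟨(s : ℕ) - (k - r), by have := s.isLt; omega⟩

/-- Squared norm `‖f ⋆_r g‖²_{2k-2r}` of the contraction of order `r`. -/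
def contrNormSq {A : Type*} (k r : ℕ) (f g : (Fin k → A) → ℝ) : ℝ :=
  ∑ᶠ (a : Fin (k - r) → A) (b : Fin (k - r) → A),
    (∑ᶠ x : Fin r → A, f (splice k r a x) * g (splice k r b x)) ^ 2

/-- The kernel `f_{k,N}^{(σ)}((a₁,b₁),…,(a_k,b_k)) =
`N^{-k/2} Σ_{i ∈ D_N^{(k)}} Π_s 1{i_{σ(s)} = a_s, i_{σ(s)+1} = b_s}`. -/
def kernelSigma (k N : ℕ) (σ : Equiv.Perm (Fin k)) (v : Fin k → ℕ × ℕ) : ℝ :=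
  (N : ℝ) ^ (-(k : ℝ) / 2) *
    ∑ i ∈ DN N k, ∏ s : Fin k,
      (if v s = (((i (σ s) : ℕ)), ((i (finRotate k (σ s)) : ℕ))) then (1 : ℝ) else 0)

/-- The symmetrized kernel `f_{k,N} = (1/k!) Σ_{σ ∈ S_k} f_{k,N}^{(σ)}`. -/
def kernelF (k N : ℕ) (v : Fin k → ℕ × ℕ) : ℝ :=
  (1 / (Nat.factorial k) : ℝ) * ∑ σ : Equiv.Perm (Fin k), kernelSigma k N σ v

open Finset

-- The decidability instances are implicit so that these lemmas rewrite sums whose `if`s carry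
-- whatever instances elaboration chose for them.
theorem finsum_ite_of_subsingleton {α M : Type*} [AddCommMonoid M] {P : α → Prop}
    {_ : DecidablePred P} {_ : Decidable (∃ x, P x)} (hP : {x | P x}.Subsingleton) (c : M) :
    ∑ᶠ x, (if P x then c else 0) = if ∃ x, P x then c else 0 := by
  split_ifs with h
  · obtain ⟨x₀, hx₀⟩ := h
    rw [finsum_eq_single (fun x => if P x then c else 0) x₀
      fun x hx => if_neg fun hPx => hx (hP hPx hx₀), if_pos hx₀]
  · exact finsum_eq_zero_of_forall_eq_zero fun x => if_neg fun hPx => h ⟨x, hPx⟩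

theorem finsum_sum_ite_of_subsingleton {α ι M : Type*} [AddCommMonoid M] (s : Finset ι)
    {P : ι → α → Prop} {_ : ∀ i, DecidablePred (P i)} {_ : ∀ i, Decidable (∃ x, P i x)}
    (hP : ∀ i ∈ s, {x | P i x}.Subsingleton) (c : ι → M) :
    ∑ᶠ x, ∑ i ∈ s, (if P i x then c i else 0) = ∑ i ∈ s, if ∃ x, P i x then c i else 0 := by
  rw [finsum_sum_comm]
  · exact sum_congr rfl fun i hi => finsum_ite_of_subsingleton (hP i hi) (c i)
  · exact fun i hi => (hP i hi).finite.subset fun x hx => by_contra fun h => hx (if_neg h)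

theorem sq_sum_ite {Y R : Type*} [CommSemiring R] (s : Finset Y) (E : Y → Prop)
    [DecidablePred E] (c : R) :
    (∑ y ∈ s, if E y then c else 0) ^ 2 = ∑ z ∈ s ×ˢ s, if E z.1 ∧ E z.2 then c ^ 2 else 0 := by
  rw [sq, sum_mul_sum, ← sum_product']
  simp only [ite_zero_mul_ite_zero, sq]

def countingKernel {ι X : Type*} (c : ℝ) (P : Finset ι) (w : ι → X) (v : X) : ℝ :=
  c * ∑ p ∈ P, if v = w p then 1 else 0

theorem countingKernel_mul_countingKernel {ι κ X : Type*} (c d : ℝ) (P : Finset ι) (Q : Finset κ)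
    (w : ι → X) (u : κ → X) (v v' : X) :
    countingKernel c P w v * countingKernel d Q u v' =
      ∑ pq ∈ P ×ˢ Q, if v = w pq.1 ∧ v' = u pq.2 then c * d else 0 := by
  rw [countingKernel, countingKernel, mul_mul_mul_comm, sum_mul_sum, sum_product, mul_sum]
  refine sum_congr rfl fun p _ => ?_
  simp only [mul_sum, ← ite_and, mul_ite, mul_one, mul_zero, and_comm]

section Contraction

variable {A ι κ : Type*} {k r : ℕ}

theorem splice_apply_of_lt (a : Fin (k - r) → A) (x : Fin r → A) {s : Fin k}
    (hs : (s : ℕ) < k - r) : splice k r a x s = a ⟨s, hs⟩ :=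
  dif_pos hs

theorem splice_apply_of_le (a : Fin (k - r) → A) (x : Fin r → A) {s : Fin k}
    (hs : k - r ≤ (s : ℕ)) :
    splice k r a x s = x ⟨s - (k - r), by have := s.isLt; omega⟩ :=
  dif_neg (by omega)

theorem splice_inj (hr : r ≤ k) {a a' : Fin (k - r) → A} {x x' : Fin r → A} :
    splice k r a x = splice k r a' x' ↔ a = a' ∧ x = x' := by
  refine ⟨fun h => ⟨funext fun t => ?_, funext fun u => ?_⟩, fun h => h.1 ▸ h.2 ▸ rfl⟩
  · have := congrFun h ⟨t, by omega⟩
    rwa [splice_apply_of_lt _ _ t.isLt, splice_apply_of_lt _ _ t.isLt] at this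
  · have hs : k - r ≤ k - r + (u : ℕ) := le_self_add
    have := congrFun h ⟨k - r + u, by omega⟩
    rw [splice_apply_of_le _ _ hs, splice_apply_of_le _ _ hs] at this
    simpa using this

def ContrSquare (k r : ℕ) (v₁ v₂ v₁' v₂' : Fin k → A) : Prop :=
  ∃ a b, (∃ x, splice k r a x = v₁ ∧ splice k r b x = v₂) ∧
    (∃ y, splice k r a y = v₁' ∧ splice k r b y = v₂')

theorem ContrSquare.eq_of_lt {v₁ v₂ v₁' v₂' : Fin k → A} (h : ContrSquare k r v₁ v₂ v₁' v₂')
    {s : Fin k} (hs : (s : ℕ) < k - r) : v₁ s = v₁' s ∧ v₂ s = v₂' s := by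
  obtain ⟨a, b, ⟨x, rfl, rfl⟩, ⟨y, rfl, rfl⟩⟩ := h
  simp only [splice_apply_of_lt _ _ hs, and_self]

theorem ContrSquare.eq_of_le {v₁ v₂ v₁' v₂' : Fin k → A} (h : ContrSquare k r v₁ v₂ v₁' v₂')
    {s : Fin k} (hs : k - r ≤ (s : ℕ)) : v₁ s = v₂ s ∧ v₁' s = v₂' s := by
  obtain ⟨a, b, ⟨x, rfl, rfl⟩, ⟨y, rfl, rfl⟩⟩ := h
  simp only [splice_apply_of_le _ _ hs, and_self]

theorem contrNormSq_countingKernel (hr : r ≤ k) (c d : ℝ) (P : Finset ι) (Q : Finset κ)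
    (w : ι → Fin k → A) (u : κ → Fin k → A) :
    contrNormSq k r (countingKernel c P w) (countingKernel d Q u) =
      (c * d) ^ 2 * #{z ∈ (P ×ˢ Q) ×ˢ (P ×ˢ Q) |
        ContrSquare k r (w z.1.1) (u z.1.2) (w z.2.1) (u z.2.2)} := by
  have inner : ∀ a b, ∑ᶠ x, countingKernel c P w (splice k r a x) *
      countingKernel d Q u (splice k r b x) =
      ∑ pq ∈ P ×ˢ Q, if ∃ x, splice k r a x = w pq.1 ∧ splice k r b x = u pq.2
        then c * d else 0 := by
    intro a b
    simp only [countingKernel_mul_countingKernel]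
    exact finsum_sum_ite_of_subsingleton _
      (fun pq _ x hx y hy => ((splice_inj hr).1 (hx.1.trans hy.1.symm)).2) _
  rw [contrNormSq]
  simp only [inner, sq_sum_ite]
  rw [finsum_congr fun a => finsum_sum_ite_of_subsingleton _ ?_ _,
    finsum_sum_ite_of_subsingleton _ ?_ _, ← sum_filter, sum_const, nsmul_eq_mul,
    mul_comm]
  · rfl
  · intro z _ a ha a' ha'
    obtain ⟨b, ⟨x, hx, -⟩, -⟩ := ha
    obtain ⟨b', ⟨x', hx', -⟩, -⟩ := ha'
    exact ((splice_inj hr).1 (hx.trans hx'.symm)).1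
  · intro z _ b hb b' hb'
    obtain ⟨⟨x, hax, hbx⟩, -⟩ := hb
    obtain ⟨⟨x', hax', hbx'⟩, -⟩ := hb'
    obtain rfl := ((splice_inj hr).1 (hax.trans hax'.symm)).2
    exact ((splice_inj hr).1 (hbx.trans hbx'.symm)).1

end Contraction

def edges {k N : ℕ} (σ : Equiv.Perm (Fin k)) (i : Fin k → Fin N) : Fin k → ℕ × ℕ :=
  fun s => ((i (σ s) : ℕ), (i (finRotate k (σ s)) : ℕ))

theorem edges_apply_eq_iff {k N : ℕ} {σ τ : Equiv.Perm (Fin k)} {i j : Fin k → Fin N}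
    {s t : Fin k} :
    edges σ i s = edges τ j t ↔
      i (σ s) = j (τ t) ∧ i (finRotate k (σ s)) = j (finRotate k (τ t)) := by
  simp only [edges, Prod.mk.injEq, Fin.val_inj]

theorem kernelSigma_eq_countingKernel (k N : ℕ) (σ : Equiv.Perm (Fin k)) :
    kernelSigma k N σ = countingKernel ((N : ℝ) ^ (-(k : ℝ) / 2)) (DN N k) (edges σ) := by
  ext v
  simp only [kernelSigma, countingKernel, prod_boole, funext_iff, mem_univ,
    true_implies, edges]

theorem kernelF_eq_countingKernel (k N : ℕ) :
    kernelF k N = countingKernel (1 / (k.factorial : ℝ) * (N : ℝ) ^ (-(k : ℝ) / 2)) (DN N k ×ˢ univ)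
      (fun p : (Fin k → Fin N) × Equiv.Perm (Fin k) => edges p.2 p.1) := by
  ext v
  simp only [kernelF, kernelSigma_eq_countingKernel, countingKernel, sum_product,
    mul_sum, mul_assoc]
  exact sum_comm

theorem exists_mem_finRotate_not_mem {n : ℕ} {T : Set (Fin n)} {x y : Fin n} (hx : x ∈ T)
    (hy : y ∉ T) : ∃ t ∈ T, finRotate n t ∉ T := by
  by_contra! hT
  rcases n with _ | _ | m
  · exact x.elim0
  · exact hy (Subsingleton.elim (α := Fin 1) x y ▸ hx)
  · have hmoved : ∀ z, finRotate (m + 2) z ≠ z := fun z =>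
      Equiv.Perm.mem_support.1 (support_finRotate ▸ mem_univ z)
    obtain ⟨i, rfl⟩ := isCycle_finRotate.exists_pow_eq (hmoved x) (hmoved y)
    exact hy (Set.MapsTo.iterate hT i hx)

theorem exists_lt_le_finRotate_apply_eq {k r : ℕ} (hr : 0 < r) (hrk : r < k)
    (τ : Equiv.Perm (Fin k)) :
    ∃ s₁ s₂ : Fin k, (s₁ : ℕ) < k - r ∧ k - r ≤ (s₂ : ℕ) ∧ finRotate k (τ s₁) = τ s₂ := by
  obtain ⟨t, ht, hrot⟩ := exists_mem_finRotate_not_mem (T := {t | (τ.symm t : ℕ) < k - r})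
    (x := τ ⟨0, by omega⟩) (y := τ ⟨k - 1, by omega⟩) (by simp; omega) (by simp; omega)
  exact ⟨τ.symm t, τ.symm (finRotate k t), ht, not_lt.1 hrot, by simp⟩

section Edges

variable {k r N : ℕ} {σ τ σ' τ' : Equiv.Perm (Fin k)} {i j i' j' : Fin k → Fin N}

theorem ContrSquare.edges_second_apply
    (h : ContrSquare k r (edges σ i) (edges τ j) (edges σ' i') (edges τ' j')) (s : Fin k) :
    j (τ s) = if (s : ℕ) < k - r then j' (τ' s) else i (σ s) := by
  split_ifs with hs
  · exact (edges_apply_eq_iff.1 (h.eq_of_lt hs).2).1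
  · exact (edges_apply_eq_iff.1 (h.eq_of_le (not_lt.1 hs)).1).1.symm

theorem ContrSquare.edges_third_apply
    (h : ContrSquare k r (edges σ i) (edges τ j) (edges σ' i') (edges τ' j')) (s : Fin k) :
    i' (σ' s) = if (s : ℕ) < k - r then i (σ s) else j' (τ' s) := by
  split_ifs with hs
  · exact (edges_apply_eq_iff.1 (h.eq_of_lt hs).1).1.symm
  · exact (edges_apply_eq_iff.1 (h.eq_of_le (not_lt.1 hs)).2).1

theorem ContrSquare.edges_fourth_apply_finRotate
    (h : ContrSquare k r (edges σ i) (edges τ j) (edges σ' i') (edges τ' j')) {s₁ s₂ : Fin k}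
    (hs₁ : (s₁ : ℕ) < k - r) (hs₂ : k - r ≤ (s₂ : ℕ)) (hrot : finRotate k (τ s₁) = τ s₂) :
    j' (finRotate k (τ' s₁)) = i (σ s₂) :=
  calc j' (finRotate k (τ' s₁)) = j (finRotate k (τ s₁)) :=
        (edges_apply_eq_iff.1 (h.eq_of_lt hs₁).2).2.symm
    _ = j (τ s₂) := by rw [hrot]
    _ = i (σ s₂) := (edges_apply_eq_iff.1 (h.eq_of_le hs₂).1).1.symm

end Edges

theorem card_contrSquare_edges_le {k r N : ℕ} (hr : 0 < r) (hrk : r < k)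
    (σ τ σ' τ' : Equiv.Perm (Fin k)) (P : Finset (Fin k → Fin N)) :
    #{z ∈ (P ×ˢ P) ×ˢ (P ×ˢ P) |
      ContrSquare k r (edges σ z.1.1) (edges τ z.1.2) (edges σ' z.2.1) (edges τ' z.2.2)} ≤
      N ^ k * N ^ (k - 1) := by
  obtain ⟨s₁, s₂, hs₁, hs₂, hrot⟩ := exists_lt_le_finRotate_apply_eq hr hrk τ
  set c := finRotate k (τ' s₁)
  calc _ ≤ #(univ : Finset ((Fin k → Fin N) × ({t // t ≠ c} → Fin N))) :=
        card_le_card_of_injOn (fun z => (z.1.1, fun t => z.2.2 t))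
          (fun _ _ => mem_coe.2 (mem_univ _)) ?_
    _ = N ^ k * N ^ (k - 1) := by simp
  rintro ⟨⟨i, j⟩, i', j'⟩ h ⟨⟨i₂, j₂⟩, i₂', j₂'⟩ h₂ heq
  simp only [coe_filter, Set.mem_ofPred_eq, Prod.mk.injEq] at h h₂ heq
  obtain ⟨-, h⟩ := h
  obtain ⟨-, h₂⟩ := h₂
  obtain ⟨rfl, hj'⟩ := heq
  obtain rfl : j' = j₂' := funext fun t => by
    by_cases ht : t = c
    · rw [ht, h.edges_fourth_apply_finRotate hs₁ hs₂ hrot,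
        h₂.edges_fourth_apply_finRotate hs₁ hs₂ hrot]
    · exact congrFun hj' ⟨t, ht⟩
  obtain rfl : j = j₂ := funext fun t => by
    obtain ⟨s, rfl⟩ := τ.surjective t
    rw [h.edges_second_apply, h₂.edges_second_apply]
  obtain rfl : i' = i₂' := funext fun t => by
    obtain ⟨s, rfl⟩ := σ'.surjective t
    rw [h.edges_third_apply, h₂.edges_third_apply]
  rfl

theorem card_contrSquare_edges_perm_le {k r N : ℕ} (hr : 0 < r) (hrk : r < k)
    (P : Finset (Fin k → Fin N)) :
    #{z ∈ ((P ×ˢ univ) ×ˢ (P ×ˢ univ)) ×ˢ ((P ×ˢ univ) ×ˢ (P ×ˢ univ)) |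
      ContrSquare k r (edges z.1.1.2 z.1.1.1) (edges z.1.2.2 z.1.2.1) (edges z.2.1.2 z.2.1.1)
        (edges z.2.2.2 z.2.2.1)} ≤ k.factorial ^ 4 * (N ^ k * N ^ (k - 1)) := by
  calc _ ≤ (N ^ k * N ^ (k - 1)) * #(univ : Finset (Equiv.Perm (Fin k) × Equiv.Perm (Fin k) ×
        Equiv.Perm (Fin k) × Equiv.Perm (Fin k))) :=
        card_le_mul_card_image_of_maps_to (f := fun z => (z.1.1.2, z.1.2.2, z.2.1.2, z.2.2.2))
          (fun _ _ => mem_univ _) _ fun e _ => ?_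
    _ = k.factorial ^ 4 * (N ^ k * N ^ (k - 1)) := by
        simp only [card_univ, Fintype.card_prod, Fintype.card_perm, Fintype.card_fin]
        ring
  obtain ⟨σ, τ, σ', τ'⟩ := e
  refine (card_le_card_of_injOn (fun z => ((z.1.1.1, z.1.2.1), (z.2.1.1, z.2.2.1))) ?_ ?_).trans
    (card_contrSquare_edges_le hr hrk σ τ σ' τ' P)
  · rintro ⟨⟨⟨i, σ₁⟩, j, τ₁⟩, ⟨i', σ₁'⟩, j', τ₁'⟩ hz
    simp only [coe_filter, mem_filter, mem_product, mem_univ, and_true, Set.mem_ofPred_eq,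
      Prod.mk.injEq] at hz
    obtain ⟨⟨hP, h⟩, rfl, rfl, rfl, rfl⟩ := hz
    simpa [hP] using h
  · rintro ⟨⟨⟨i, σ₁⟩, j, τ₁⟩, ⟨i', σ₁'⟩, j', τ₁'⟩ hz
      ⟨⟨⟨i₂, σ₂⟩, j₂, τ₂⟩, ⟨i₂', σ₂'⟩, j₂', τ₂'⟩ hz₂ heq
    simp only [coe_filter, mem_filter, Set.mem_ofPred_eq, Prod.mk.injEq] at hz hz₂ heq
    obtain ⟨-, rfl, rfl, rfl, rfl⟩ := hz
    obtain ⟨-, rfl, rfl, rfl, rfl⟩ := hz₂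
    obtain ⟨⟨rfl, rfl⟩, rfl, rfl⟩ := heq
    rfl

theorem rpow_neg_half_mul_self {x : ℝ} (hx : 0 ≤ x) (k : ℕ) :
    x ^ (-(k : ℝ) / 2) * x ^ (-(k : ℝ) / 2) = (x ^ k)⁻¹ := by
  rw [← sq, ← Real.rpow_mul_natCast hx, Nat.cast_ofNat, div_mul_cancel₀ _ two_ne_zero,
    Real.rpow_neg hx, Real.rpow_natCast]

theorem normalization_sq_mul_le {N k : ℕ} (hN : 0 < N) (hk : k ≠ 0) {T : ℝ}
    (hT : T ≤ N ^ k * N ^ (k - 1)) :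
    ((N : ℝ) ^ (-(k : ℝ) / 2) * (N : ℝ) ^ (-(k : ℝ) / 2)) ^ 2 * T ≤ (N : ℝ)⁻¹ := by
  have hN' : (0 : ℝ) < N := Nat.cast_pos.2 hN
  calc _ ≤ (((N : ℝ) ^ k)⁻¹) ^ 2 * (N ^ k * N ^ (k - 1)) := by
        rw [rpow_neg_half_mul_self hN'.le]
        gcongr
    _ = (N : ℝ)⁻¹ := by
        rw [← pow_sub_one_mul hk (N : ℝ)]
        field_simp

theorem contrNormSq_kernelSigma_le {k r N : ℕ} (hN : 0 < N) (hr : 0 < r) (hrk : r < k)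
    (σ τ : Equiv.Perm (Fin k)) :
    contrNormSq k r (kernelSigma k N σ) (kernelSigma k N τ) ≤ (N : ℝ)⁻¹ := by
  rw [kernelSigma_eq_countingKernel, kernelSigma_eq_countingKernel,
    contrNormSq_countingKernel hrk.le]
  exact normalization_sq_mul_le hN (by omega)
    (by exact_mod_cast card_contrSquare_edges_le hr hrk σ τ σ τ (DN N k))

theorem contrNormSq_kernelF_le {k r N : ℕ} (hN : 0 < N) (hr : 0 < r) (hrk : r < k) :
    contrNormSq k r (kernelF k N) (kernelF k N) ≤ (N : ℝ)⁻¹ := by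
  rw [kernelF_eq_countingKernel, contrNormSq_countingKernel hrk.le,
    show ∀ a f T : ℝ, (1 / f * a * (1 / f * a)) ^ 2 * T = (a * a) ^ 2 * (T / f ^ 4) from
      fun _ _ _ => by ring]
  refine normalization_sq_mul_le hN (by omega) ((div_le_iff₀ (by positivity)).2 ?_)
  rw [mul_comm]
  exact_mod_cast card_contrSquare_edges_perm_le hr hrk (DN N k)

theorem kernel_contraction_bounds_general (k : ℕ) :
    (∃ C : ℝ, ∀ r : ℕ, 1 ≤ r → r ≤ k - 1 → ∀ N : ℕ, 2 ≤ N →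
      Real.sqrt (contrNormSq k r (kernelF k N) (kernelF k N)) ≤
        C * (N : ℝ) ^ (-(1 : ℝ) / 2)) ∧
    (∀ N : ℕ, 2 ≤ N → ∀ σ τ : Equiv.Perm (Fin k), ∀ r : ℕ, 1 ≤ r → r ≤ k - 1 →
      contrNormSq k r (kernelSigma k N σ) (kernelSigma k N τ) ≤ ((N : ℝ))⁻¹) := by
  refine ⟨⟨1, fun r hr hrk N hN => ?_⟩, fun N hN σ τ r hr hrk =>
    contrNormSq_kernelSigma_le (by omega) (by omega) (by omega) σ τ⟩
  calc Real.sqrt (contrNormSq k r (kernelF k N) (kernelF k N)) ≤ Real.sqrt (N : ℝ)⁻¹ :=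
        Real.sqrt_le_sqrt (contrNormSq_kernelF_le (by omega) (by omega) (by omega))
    _ = 1 * (N : ℝ) ^ (-(1 : ℝ) / 2) := by
        rw [one_mul, Real.sqrt_inv, Real.sqrt_eq_rpow, neg_div, Real.rpow_neg (Nat.cast_nonneg N)]

/-- Step 1 of the proof of Proposition 3.1 (see (3.27)): the contraction norms
of the kernels `f_{k,N}` are `O(N^{-1/2})`; in fact
`‖f_{k,N}^{(σ)} ⋆_r f_{k,N}^{(τ)}‖² ≤ N^{-1}` for all `σ, τ ∈ S_k`. -/
theorem kernel_contraction_bounds (k : ℕ) (hk : 2 ≤ k) :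
    (∃ C : ℝ, ∀ r : ℕ, 1 ≤ r → r ≤ k - 1 → ∀ N : ℕ, 2 ≤ N →
      Real.sqrt (contrNormSq k r (kernelF k N) (kernelF k N)) ≤
        C * (N : ℝ) ^ (-(1 : ℝ) / 2)) ∧
    (∀ N : ℕ, 2 ≤ N → ∀ σ τ : Equiv.Perm (Fin k), ∀ r : ℕ, 1 ≤ r → r ≤ k - 1 →
      contrNormSq k r (kernelSigma k N σ) (kernelSigma k N τ) ≤ ((N : ℝ))⁻¹) :=
  kernel_contraction_bounds_general k

end
end
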